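/- arXiv:1312.1758 — 9 statements merged into one kernel-verified Lean document; each statement's English description precedes it below -/
import Mathlib

section
/- If A is a d×d real matrix such that for every nonzero x ∈ ℝ^d there exists an index k with x_k (Ax)_k > 0, then A is a P-matrix (every principal minor of A is positive); and conversely every P-matrix has this property. -/
open Matrix

/-- A real square matrix is a P-matrix if every principal minor is positive. -/
def IsPMatrix {d : ℕ} (A : Matrix (Fin d) (Fin d) ℝ) : Prop :=
  ∀ s : Finset (Fin d),
    0 < (A.submatrix (fun i : s => (i : Fin d)) (fun j : s => (j : Fin d))).det

/-!
If `A` reverses the sign of no nonzero vector, neither does any principal submatrix `B` (extend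
vectors by zero). Then `det (B + t • 1)` has no zero `t ≥ 0`, since a kernel vector `x` would give
`x k * (B *ᵥ x) k = -t * x k ^ 2 ≤ 0` for all `k`; as a monic polynomial in `t` it is therefore
positive at `t = 0`.

Conversely, `det (diagonal a * A + diagonal b)` expands as the sum over `s` of
`(∏ i ∈ s, a i) * (∏ i ∉ s, b i) * det A[s, s]`, which is positive for a P-matrix when `a, b ≥ 0`
and `a + b > 0`. If `x ≠ 0` had `x k * (A *ᵥ x) k ≤ 0` for all `k`, then `a = x ^ 2` and
`b = -x * (A *ᵥ x)` (with `b k = 1` where `x k = 0`) would put `x` in the kernel of such a matrix.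
-/

open Polynomial Finset

theorem Polynomial.Monic.eval_pos_of_forall_not_isRoot {p : ℝ[X]} (hp : p.Monic) {a : ℝ}
    (hroot : ∀ t, a ≤ t → ¬p.IsRoot t) : 0 < p.eval a := by
  rcases Nat.eq_zero_or_pos p.natDegree with hdeg | hdeg
  · simp [hp.natDegree_eq_zero.mp hdeg]
  obtain ⟨b, hb, hab⟩ := (((tendsto_atTop_of_leadingCoeff_nonneg p
    (natDegree_pos_iff_degree_pos.mp hdeg) (by simp [hp.leadingCoeff])).eventually_gt_atTop 0).and
    (Filter.eventually_ge_atTop a)).exists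
  by_contra! hneg
  obtain ⟨c, hc, hroot_c⟩ := intermediate_value_Icc hab p.continuous.continuousOn ⟨hneg, hb.le⟩
  exact hroot c hc.1 hroot_c

namespace Matrix

variable {n R : Type*} [Fintype n] [CommRing R]

theorem submatrix_mulVec_eq_mulVec_extend (A : Matrix n n R) (s : Finset n) (y : s → R) (k : s) :
    (A.submatrix ((↑) : s → n) (↑) *ᵥ y) k = (A *ᵥ Function.extend (↑) y 0) k := by
  simp only [mulVec, dotProduct, submatrix_apply]
  rw [← sum_subset (subset_univ s) fun j _ hj => by simp [Function.extend_val_apply' hj],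
    ← sum_coe_sort s]
  simp

theorem forall_exists_mul_submatrix_mulVec_pos {A : Matrix n n ℝ}
    (h : ∀ x ≠ 0, ∃ k, 0 < x k * (A *ᵥ x) k) (s : Finset n) :
    ∀ y ≠ 0, ∃ k, 0 < y k * (A.submatrix ((↑) : s → n) (↑) *ᵥ y) k := by
  intro y hy
  set x : n → ℝ := Function.extend (↑) y 0
  have hxy : ∀ k : s, x k = y k := fun k => Function.extend_val_apply k.2
  obtain ⟨k, hk⟩ := h x fun hx => hy (funext fun k => by simp [← hxy, hx])
  have hks : k ∈ s := by
    by_contra hks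
    simp [x, Function.extend_val_apply' hks] at hk
  exact ⟨⟨k, hks⟩, by rwa [submatrix_mulVec_eq_mulVec_extend, ← hxy]⟩

variable [DecidableEq n]

theorem det_pos_of_forall_exists_mul_mulVec_pos (B : Matrix n n ℝ)
    (h : ∀ x ≠ 0, ∃ k, 0 < x k * (B *ᵥ x) k) : 0 < B.det := by
  have heval : ∀ t, (-B).charpoly.eval t = (scalar n t + B).det := fun t => by
    rw [eval_charpoly, sub_neg_eq_add]
  have hroot : ∀ t, 0 ≤ t → ¬(-B).charpoly.IsRoot t := by
    intro t ht hroot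
    obtain ⟨x, hx, hker⟩ := exists_mulVec_eq_zero_iff.mpr ((heval t).symm.trans hroot)
    obtain ⟨k, hk⟩ := h x hx
    have hBx : (B *ᵥ x) k = -(t * x k) := by
      have := congrFun hker k
      simp only [scalar_apply, add_mulVec, diagonal_const_mulVec, Pi.add_apply, Pi.smul_apply,
        smul_eq_mul, Pi.zero_apply] at this
      linarith
    rw [hBx] at hk
    nlinarith [mul_nonneg ht (sq_nonneg (x k))]
  simpa [heval] using (charpoly_monic (-B)).eval_pos_of_forall_not_isRoot hroot

theorem det_of_piecewise_single (A : Matrix n n R) (s : Finset n) :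
    (of (s.piecewise (fun i => A i) fun i => Pi.single i 1)).det =
      (A.submatrix ((↑) : s → n) ((↑) : s → n)).det := by
  set M := of (s.piecewise (fun i => A i) fun i => Pi.single i 1)
  have hblocks : M.submatrix (Equiv.sumCompl (· ∈ s)) (Equiv.sumCompl (· ∈ s)) =
      fromBlocks (A.submatrix ((↑) : s → n) (↑))
        (A.submatrix ((↑) : s → n) ((↑) : {i // i ∉ s} → n)) 0 1 := by
    ext (i | i) (j | j)
    · simp [M, i.2]
    · simp [M, i.2]
    · simp [M, i.2, ne_of_mem_of_not_mem j.2 i.2]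
    · simp [M, i.2, Pi.single_apply, one_apply, Subtype.ext_iff, eq_comm]
  rw [← det_submatrix_equiv_self (Equiv.sumCompl (· ∈ s)), hblocks, det_fromBlocks_zero₂₁,
    det_one, mul_one]

theorem det_diagonal_mul_add_diagonal (A : Matrix n n R) (a b : n → R) :
    (diagonal a * A + diagonal b).det =
      ∑ s : Finset n, (∏ i ∈ s, a i) * (∏ i ∈ sᶜ, b i) *
        (A.submatrix ((↑) : s → n) (↑)).det := by
  have hrows : diagonal a * A + diagonal b =
      of ((fun i => a i • A i) + fun i => b i • Pi.single i 1) := by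
    ext i j
    simp [diagonal_apply, Pi.single_apply, eq_comm]
  have hpiece : ∀ s : Finset n, s.piecewise (fun i => a i • A i) (fun i => b i • Pi.single i 1) =
      fun i => s.piecewise a b i • s.piecewise (fun i => A i) (fun i => Pi.single i 1) i := by
    intro s; funext i; by_cases hi : i ∈ s <;> simp [hi]
  rw [hrows]
  refine ((detRowAlternating : (n → R) [⋀^n]→ₗ[R] R).map_add_univ _ _).trans ?_
  refine sum_congr rfl fun s _ => ?_
  rw [hpiece, AlternatingMap.map_smul_univ, prod_piecewise, univ_inter, ← compl_eq_univ_sdiff,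
    smul_eq_mul]
  exact congrArg _ (det_of_piecewise_single A s)

theorem det_diagonal_mul_add_diagonal_pos {A : Matrix n n ℝ}
    (hA : ∀ s : Finset n, 0 < (A.submatrix ((↑) : s → n) (↑)).det) {a b : n → ℝ}
    (ha : ∀ i, 0 ≤ a i) (hb : ∀ i, 0 ≤ b i) (hab : ∀ i, 0 < a i + b i) :
    0 < (diagonal a * A + diagonal b).det := by
  rw [det_diagonal_mul_add_diagonal]
  refine sum_pos' (fun s _ => ?_) ⟨univ.filter (0 < a ·), mem_univ _, ?_⟩
  · exact mul_nonneg (mul_nonneg (prod_nonneg fun i _ => ha i) (prod_nonneg fun i _ => hb i))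
      (hA s).le
  · refine mul_pos (mul_pos (prod_pos fun i hi => ?_) (prod_pos fun i hi => ?_)) (hA _)
    · exact (mem_filter.mp hi).2
    · have : a i = 0 := (ha i).antisymm' (by simpa using hi)
      simpa [this] using hab i

theorem exists_mul_mulVec_pos_of_forall_det_submatrix_pos {A : Matrix n n ℝ}
    (hA : ∀ s : Finset n, 0 < (A.submatrix ((↑) : s → n) (↑)).det) {x : n → ℝ} (hx : x ≠ 0) :
    ∃ k, 0 < x k * (A *ᵥ x) k := by
  by_contra! hrev
  set b : n → ℝ := fun i => if x i = 0 then 1 else -(x i * (A *ᵥ x) i)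
  have hb : ∀ i, 0 ≤ b i := fun i => by by_cases hi : x i = 0 <;> simp [b, hi, hrev i]
  have hab : ∀ i, 0 < x i ^ 2 + b i := fun i => by
    by_cases hi : x i = 0
    · simp [b, hi]
    · linarith [pow_two_pos_of_ne_zero hi, hb i]
  have hker : (diagonal (x ^ 2) * A + diagonal b) *ᵥ x = 0 := by
    funext i
    by_cases hi : x i = 0
    · simp [add_mulVec, ← mulVec_mulVec, mulVec_diagonal, hi]
    · simp only [add_mulVec, ← mulVec_mulVec, mulVec_diagonal, b, if_neg hi, Pi.add_apply,
        Pi.pow_apply, Pi.zero_apply]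
      ring
  exact (det_diagonal_mul_add_diagonal_pos hA (fun i => sq_nonneg (x i)) hb hab).ne'
    (exists_mulVec_eq_zero_iff.mp ⟨x, hx, hker⟩)

end Matrix

theorem pmatrix_sign_characterization {d : ℕ} (A : Matrix (Fin d) (Fin d) ℝ) :
    (∀ x : Fin d → ℝ, x ≠ 0 → ∃ k : Fin d, x k * (A.mulVec x) k > 0) ↔ IsPMatrix A :=
  ⟨fun h s =>
    det_pos_of_forall_exists_mul_mulVec_pos _ (forall_exists_mul_submatrix_mulVec_pos h s),
    fun hA _ hx => exists_mul_mulVec_pos_of_forall_det_submatrix_pos hA hx⟩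
end

section
/- Suppose Σ is a d×d symmetric positive definite matrix and there exist positive constants C_1,…,C_d with Σ_{i,j} C_i R_{ji} θ_j θ_i = ½⟨θ, Σθ⟩ for all θ ∈ ℝ^d. Then R is a P-matrix. -/
open Matrix

/-!
The quadratic identity says that `A = R * diagonal C` has symmetric part `S / 2`, so
`xᵀ A x > 0` for every `x ≠ 0`; this persists on principal submatrices, whose symmetric parts
are principal submatrices of `S`. A real matrix with positive quadratic form has positive
determinant: `det ((1 - t) • 1 + t • A)` never vanishes on `[0, 1]` and equals `1` at `t = 0`.
Finally the principal minors of `A` are those of `R` times positive products of the `C i`.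
-/

namespace Matrix

variable {n : Type*} [Fintype n]

theorem dotProduct_add_transpose_mulVec {R : Type*} [CommSemiring R] (A : Matrix n n R)
    (x : n → R) : x ⬝ᵥ (A + Aᵀ) *ᵥ x = 2 * (x ⬝ᵥ A *ᵥ x) := by
  rw [add_mulVec, dotProduct_add, dotProduct_transpose_mulVec, two_mul]

theorem posDef_add_transpose_iff {A : Matrix n n ℝ} :
    (A + Aᵀ).PosDef ↔ ∀ x : n → ℝ, x ≠ 0 → 0 < x ⬝ᵥ A *ᵥ x := by
  constructor
  · intro h x hx
    have := h.dotProduct_mulVec_pos hx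
    rw [star_trivial, dotProduct_add_transpose_mulVec] at this
    linarith
  · intro h
    refine .of_dotProduct_mulVec_pos (isSymm_add_transpose_self A) fun x hx => ?_
    rw [star_trivial, dotProduct_add_transpose_mulVec]
    exact mul_pos two_pos (h x hx)

variable [DecidableEq n]

theorem det_ne_zero_of_dotProduct_mulVec_pos {A : Matrix n n ℝ}
    (hA : ∀ x : n → ℝ, x ≠ 0 → 0 < x ⬝ᵥ A *ᵥ x) : A.det ≠ 0 := by
  rintro hdet
  obtain ⟨v, hv, hAv⟩ := exists_mulVec_eq_zero_iff.mpr hdet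
  simpa [hAv] using hA v hv

theorem det_pos_of_dotProduct_mulVec_pos {A : Matrix n n ℝ}
    (hA : ∀ x : n → ℝ, x ≠ 0 → 0 < x ⬝ᵥ A *ᵥ x) : 0 < A.det := by
  set M : ℝ → Matrix n n ℝ := fun t => (1 - t) • (1 : Matrix n n ℝ) + t • A
  have hM : ∀ t ∈ Set.Icc (0 : ℝ) 1, ∀ x : n → ℝ, x ≠ 0 → 0 < x ⬝ᵥ M t *ᵥ x := by
    intro t ⟨ht₀, ht₁⟩ x hx
    have hx₁ : 0 < x ⬝ᵥ (1 : Matrix n n ℝ) *ᵥ x := by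
      simpa using PosDef.one.dotProduct_mulVec_pos hx
    have hcomb : x ⬝ᵥ M t *ᵥ x = (1 - t) • (x ⬝ᵥ (1 : Matrix n n ℝ) *ᵥ x) + t • (x ⬝ᵥ A *ᵥ x) := by
      simp only [M, add_mulVec, smul_mulVec, dotProduct_add, dotProduct_smul]
    rw [hcomb]
    exact convex_Ioi (0 : ℝ) (Set.mem_Ioi.2 hx₁) (Set.mem_Ioi.2 (hA x hx)) (by linarith) ht₀
      (by ring)
  have hcont : Continuous fun t => (M t).det := by fun_prop
  by_contra! hle
  obtain ⟨t, ht, hdet⟩ := intermediate_value_Icc' zero_le_one hcont.continuousOn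
    (show (0 : ℝ) ∈ Set.Icc (M 1).det (M 0).det by simp [M, hle])
  exact det_ne_zero_of_dotProduct_mulVec_pos (hM t ht) hdet

end Matrix

theorem isPMatrix_of_posDef_add_transpose {d : ℕ} {A : Matrix (Fin d) (Fin d) ℝ}
    (hA : (A + Aᵀ).PosDef) : IsPMatrix A := by
  intro s
  apply det_pos_of_dotProduct_mulVec_pos
  rw [← posDef_add_transpose_iff, transpose_submatrix]
  exact hA.submatrix Subtype.val_injective

theorem IsPMatrix.of_mul_diagonal {d : ℕ} {R : Matrix (Fin d) (Fin d) ℝ} {C : Fin d → ℝ}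
    (hC : ∀ i, 0 < C i) (h : IsPMatrix (R * diagonal C)) : IsPMatrix R := by
  intro s
  have hsub : (R * diagonal C).submatrix (fun i : s => (i : Fin d)) (fun j : s => (j : Fin d))
      = R.submatrix (fun i : s => (i : Fin d)) (fun j : s => (j : Fin d))
        * diagonal (fun j : s => C j) := by
    ext i j
    simp [mul_diagonal]
  have hprod : 0 < ∏ j : s, C j := Finset.prod_pos fun j _ => hC j
  have := h s
  rw [hsub, det_mul, det_diagonal] at this
  exact pos_of_mul_pos_left this hprod.le

theorem dotProduct_mul_diagonal_mulVec {d : ℕ} (R : Matrix (Fin d) (Fin d) ℝ) (C θ : Fin d → ℝ) :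
    θ ⬝ᵥ (R * diagonal C) *ᵥ θ = ∑ i : Fin d, ∑ j : Fin d, C i * R j i * θ j * θ i := by
  simp only [dotProduct, mulVec, mul_diagonal, Finset.mul_sum]
  rw [Finset.sum_comm]
  exact Finset.sum_congr rfl fun _ _ => Finset.sum_congr rfl fun _ _ => by ring

theorem pmatrix_from_quadratic_identity {d : ℕ}
    (S : Matrix (Fin d) (Fin d) ℝ) (hS : S.PosDef)
    (R : Matrix (Fin d) (Fin d) ℝ) (C : Fin d → ℝ) (hC : ∀ i, 0 < C i)
    (hid : ∀ θ : Fin d → ℝ,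
      ∑ i : Fin d, ∑ j : Fin d, C i * R j i * θ j * θ i
        = (1/2 : ℝ) * (θ ⬝ᵥ S.mulVec θ)) :
    IsPMatrix R := by
  refine IsPMatrix.of_mul_diagonal hC (isPMatrix_of_posDef_add_transpose ?_)
  rw [posDef_add_transpose_iff]
  intro θ hθ
  have hSθ : 0 < θ ⬝ᵥ S *ᵥ θ := by simpa using hS.dotProduct_mulVec_pos hθ
  rw [dotProduct_mul_diagonal_mulVec, hid]
  positivity
end

section
/- Let R be an invertible d×d matrix, μ ∈ ℝ^d with R⁻¹μ < 0, Σ symmetric positive definite, and θ^{(i,r)} = Δ_i B^{(i)} where B = (R⁻¹)ᵀ and Δ_i = -2⟨μ, B^{(i)}⟩/⟨B^{(i)}, Σ B^{(i)}⟩. If R is a P-matrix, then for all i < j, the 2×2 matrix A^{ij} with entries A^{ij} = [[θ^{(i,r)}_i, θ^{(j,r)}_i],[θ^{(i,r)}_j, θ^{(j,r)}_j]] has positive determinant. -/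
open Matrix

namespace Matrix

variable {R m m' n : Type*} [CommRing R] [Fintype m] [Fintype m'] [Fintype n]
  [DecidableEq m] [DecidableEq m'] [DecidableEq n]

/-- Jacobi's complementary minor identity. Writing `A = [[a, b], [c, d]]` and
`A⁻¹ = [[a', b'], [c', d']]` in the blocks given by `e`, it follows from
`A * [[a', 0], [c', 1]] = [[1, b], [0, d]]`. -/
theorem det_mul_det_inv_submatrix_inl (A : Matrix n n R) (hA : IsUnit A.det)
    (e : m ⊕ m' ≃ n) :
    A.det * (A⁻¹.submatrix (e ∘ Sum.inl) (e ∘ Sum.inl)).det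
      = (A.submatrix (e ∘ Sum.inr) (e ∘ Sum.inr)).det := by
  set M := A.submatrix e e
  set N := A⁻¹.submatrix e e
  have hMN : M * N = 1 := by
    rw [submatrix_mul_equiv, mul_nonsing_inv A hA, submatrix_one_equiv]
  rw [← fromBlocks_toBlocks M, ← fromBlocks_toBlocks N, fromBlocks_multiply,
    ← fromBlocks_one, fromBlocks_inj] at hMN
  obtain ⟨h₁₁, -, h₂₁, -⟩ := hMN
  have hfactor : M * fromBlocks N.toBlocks₁₁ 0 N.toBlocks₂₁ 1
      = fromBlocks 1 M.toBlocks₁₂ 0 M.toBlocks₂₂ := by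
    conv_lhs => rw [← fromBlocks_toBlocks M]
    rw [fromBlocks_multiply, h₁₁, h₂₁]
    simp
  have hdet := congrArg det hfactor
  rw [det_mul, det_fromBlocks_zero₁₂, det_fromBlocks_zero₂₁, det_one, det_one, mul_one,
    one_mul, det_submatrix_equiv_self] at hdet
  exact hdet

end Matrix

namespace IsPMatrix

variable {d : ℕ} {A : Matrix (Fin d) (Fin d) ℝ}

theorem det_submatrix_pos (hA : IsPMatrix A) {m : Type*} [Fintype m] [DecidableEq m]
    {f : m → Fin d} (hf : Function.Injective f) : 0 < (A.submatrix f f).det := by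
  let s : Finset (Fin d) := Finset.univ.image f
  let e : m ≃ s := (Equiv.ofInjective f hf).trans
    (Equiv.subtypeEquivRight fun x => by simp [s])
  have hsub : A.submatrix f f = (A.submatrix (fun i : s => (i : Fin d))
      (fun j : s => (j : Fin d))).submatrix e e := rfl
  rw [hsub, det_submatrix_equiv_self]
  exact hA s

theorem det_pos (hA : IsPMatrix A) : 0 < A.det := by
  simpa using hA.det_submatrix_pos Function.injective_id

theorem mul_sub_mul_pos {i j : Fin d} (hA : IsPMatrix A) (hij : i ≠ j) :
    0 < A i i * A j j - A i j * A j i := by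
  have hf : Function.Injective ![i, j] := by
    intro a b
    fin_cases a <;> fin_cases b <;> simp [hij, hij.symm]
  have h := hA.det_submatrix_pos hf
  rw [det_fin_two] at h
  simpa using h

theorem inv (hA : IsPMatrix A) : IsPMatrix A⁻¹ := by
  intro s
  have hjacobi := det_mul_det_inv_submatrix_inl A hA.det_pos.ne'.isUnit
    (Equiv.sumCompl (· ∈ s))
  have hcompl := hA.det_submatrix_pos
    (Subtype.val_injective (p := fun x : Fin d => x ∉ s))
  exact pos_of_mul_pos_right (hjacobi.symm ▸ hcompl) hA.det_pos.le

end IsPMatrix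

theorem Matrix.PosDef.mul_dotProduct_div_pos {n : Type*} [Fintype n]
    {S : Matrix n n ℝ} (hS : S.PosDef) {μ v : n → ℝ} (hv : μ ⬝ᵥ v < 0) {c : ℝ} (hc : c < 0) :
    0 < c * (μ ⬝ᵥ v) / (v ⬝ᵥ S *ᵥ v) := by
  have hv0 : v ≠ 0 := by
    rintro rfl
    simp at hv
  exact div_pos (mul_pos_of_neg_of_neg hc hv) (by simpa using hS.dotProduct_mulVec_pos hv0)

theorem cij_positive_of_pmatrix_general {d : ℕ}
    (S : Matrix (Fin d) (Fin d) ℝ) (hS : S.PosDef)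
    (μ : Fin d → ℝ) (R : Matrix (Fin d) (Fin d) ℝ)
    (hμ : ∀ i, (R⁻¹.mulVec μ) i < 0)
    (B : Fin d → Fin d → ℝ) (hB : ∀ i k, B i k = (R⁻¹)ᵀ k i)
    (Δ : Fin d → ℝ) (hΔ : ∀ i, Δ i = -2 * (μ ⬝ᵥ B i) / (B i ⬝ᵥ S.mulVec (B i)))
    (θr : Fin d → Fin d → ℝ) (hθr : ∀ i, θr i = Δ i • B i)
    (hP : IsPMatrix R) :
    ∀ i j : Fin d, i < j →
      0 < (!![θr i i, θr j i; θr i j, θr j j] : Matrix (Fin 2) (Fin 2) ℝ).det := by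
  intro i j hij
  have hBrow : ∀ k, B k = R⁻¹ k := fun k => funext (hB k)
  have hΔpos : ∀ k, 0 < Δ k := fun k => by
    rw [hΔ, hBrow]
    exact hS.mul_dotProduct_div_pos ((dotProduct_comm _ _).trans_lt (hμ k)) (by norm_num)
  have hminor := hP.inv.mul_sub_mul_pos hij.ne
  calc (0 : ℝ) < Δ i * Δ j * (R⁻¹ i i * R⁻¹ j j - R⁻¹ i j * R⁻¹ j i) :=
        mul_pos (mul_pos (hΔpos i) (hΔpos j)) hminor
    _ = _ := by
      rw [det_fin_two_of, hθr, hθr, hBrow, hBrow]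
      simp only [Pi.smul_apply, smul_eq_mul]
      ring

theorem cij_positive_of_pmatrix {d : ℕ}
    (S : Matrix (Fin d) (Fin d) ℝ) (hS : S.PosDef)
    (μ : Fin d → ℝ) (R : Matrix (Fin d) (Fin d) ℝ)
    (hR : IsUnit R.det) (hμ : ∀ i, (R⁻¹.mulVec μ) i < 0)
    (B : Fin d → Fin d → ℝ) (hB : ∀ i k, B i k = (R⁻¹)ᵀ k i)
    (Δ : Fin d → ℝ) (hΔ : ∀ i, Δ i = -2 * (μ ⬝ᵥ B i) / (B i ⬝ᵥ S.mulVec (B i)))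
    (θr : Fin d → Fin d → ℝ) (hθr : ∀ i, θr i = Δ i • B i)
    (hP : IsPMatrix R) :
    ∀ i j : Fin d, i < j →
      0 < (!![θr i i, θr j i; θr i j, θr j j] : Matrix (Fin 2) (Fin 2) ℝ).det :=
  cij_positive_of_pmatrix_general S hS μ R hμ B hB Δ hΔ θr hθr hP
end

section
/- Let R be an invertible d×d matrix and fix i ≠ j. If the 2×2 matrix A^{ij} (formed from the i-th and j-th coordinates of θ^{(i,r)} and θ^{(j,r)}, which span the plane Γ_{ij} = {θ : ⟨R^{(k)}, θ⟩ = 0 for all k ∉ {i,j}}) is invertible, then the (d-2)×(d-2) principal submatrix R^{|ij} of R obtained by deleting rows and columns i and j is invertible. -/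
open Matrix

theorem principal_submatrix_invertible {d : ℕ}
    (S : Matrix (Fin d) (Fin d) ℝ) (hS : S.PosDef)
    (μ : Fin d → ℝ) (R : Matrix (Fin d) (Fin d) ℝ)
    (hR : IsUnit R.det) (hμ : ∀ i, (R⁻¹.mulVec μ) i < 0)
    (B : Fin d → Fin d → ℝ) (hB : ∀ i k, B i k = (R⁻¹)ᵀ k i)
    (Δ : Fin d → ℝ) (hΔ : ∀ i, Δ i = -2 * (μ ⬝ᵥ B i) / (B i ⬝ᵥ S.mulVec (B i)))
    (θr : Fin d → Fin d → ℝ) (hθr : ∀ i, θr i = Δ i • B i)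
    (i j : Fin d) (hij : i ≠ j)
    (hA : IsUnit (!![θr i i, θr j i; θr i j, θr j j] : Matrix (Fin 2) (Fin 2) ℝ).det) :
    IsUnit ((R.submatrix (fun k : {k : Fin d // k ≠ i ∧ k ≠ j} => (k : Fin d))
      (fun k : {k : Fin d // k ≠ i ∧ k ≠ j} => (k : Fin d))).det) := by
  classical
  have hji : j ≠ i := hij.symm
  set α := {k : Fin d // k ≠ i ∧ k ≠ j} with hα
  let f : α ⊕ Fin 2 → Fin d := Sum.elim (fun k => (k : Fin d)) ![i, j]
  let g : Fin d → α ⊕ Fin 2 := fun k =>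
    if h1 : k = i then Sum.inr 0 else if h2 : k = j then Sum.inr 1 else Sum.inl ⟨k, h1, h2⟩
  have hfg : ∀ k, f (g k) = k := by
    intro k
    by_cases h1 : k = i
    · simp [f, g, h1]
    · by_cases h2 : k = j
      · simp [f, g, h1, h2, hji]
      · simp [f, g, h1, h2]
  have hgf : ∀ s, g (f s) = s := by
    rintro (⟨k, h1, h2⟩ | a)
    · simp [f, g, h1, h2]
    · fin_cases a
      · simp [f, g]
      · simp [f, g, hji]
  let e : α ⊕ Fin 2 ≃ Fin d := ⟨f, g, hgf, hfg⟩
  set M := R.submatrix e e with hM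
  set N := (R⁻¹).submatrix e e with hN
  have hMN : M * N = 1 := by
    rw [hM, hN, Matrix.submatrix_mul_equiv, Matrix.mul_nonsing_inv R hR,
      Matrix.submatrix_one_equiv]
  have hMN' : fromBlocks
      (M.toBlocks₁₁ * N.toBlocks₁₁ + M.toBlocks₁₂ * N.toBlocks₂₁)
      (M.toBlocks₁₁ * N.toBlocks₁₂ + M.toBlocks₁₂ * N.toBlocks₂₂)
      (M.toBlocks₂₁ * N.toBlocks₁₁ + M.toBlocks₂₂ * N.toBlocks₂₁)
      (M.toBlocks₂₁ * N.toBlocks₁₂ + M.toBlocks₂₂ * N.toBlocks₂₂)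
      = fromBlocks 1 0 0 1 := by
    rw [← Matrix.fromBlocks_multiply, Matrix.fromBlocks_toBlocks,
      Matrix.fromBlocks_toBlocks, hMN, Matrix.fromBlocks_one]
  have e12 := congrArg Matrix.toBlocks₁₂ hMN'
  have e22 := congrArg Matrix.toBlocks₂₂ hMN'
  simp only [Matrix.toBlocks_fromBlocks₁₂, Matrix.toBlocks_fromBlocks₂₂] at e12 e22
  have key : M * fromBlocks 1 N.toBlocks₁₂ 0 N.toBlocks₂₂ =
      fromBlocks M.toBlocks₁₁ 0 M.toBlocks₂₁ 1 := by
    conv_lhs => rw [← Matrix.fromBlocks_toBlocks M]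
    rw [Matrix.fromBlocks_multiply]
    simp only [Matrix.mul_one, Matrix.mul_zero, add_zero, e12, e22]
  have hdet := congrArg Matrix.det key
  rw [Matrix.det_mul, Matrix.det_fromBlocks_zero₂₁, Matrix.det_fromBlocks_zero₁₂] at hdet
  simp only [Matrix.det_one, one_mul, mul_one] at hdet
  -- det N₂₂ ≠ 0 from hA
  have hθ : ∀ a b : Fin d, θr a b = Δ a * R⁻¹ a b := by
    intro a b
    rw [hθr a]
    simp [hB, Matrix.transpose_apply]
  have hAdet : (!![θr i i, θr j i; θr i j, θr j j] : Matrix (Fin 2) (Fin 2) ℝ).det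
      = Δ i * Δ j * (N.toBlocks₂₂).det := by
    rw [Matrix.det_fin_two_of, Matrix.det_fin_two]
    have h00 : N.toBlocks₂₂ 0 0 = R⁻¹ i i := rfl
    have h01 : N.toBlocks₂₂ 0 1 = R⁻¹ i j := rfl
    have h10 : N.toBlocks₂₂ 1 0 = R⁻¹ j i := rfl
    have h11 : N.toBlocks₂₂ 1 1 = R⁻¹ j j := rfl
    rw [h00, h01, h10, h11, hθ, hθ, hθ, hθ]
    ring
  have hN22 : (N.toBlocks₂₂).det ≠ 0 := by
    intro h
    rw [isUnit_iff_ne_zero, hAdet, h, mul_zero] at hA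
    exact hA rfl
  have hMdet : M.det = R.det := by rw [hM, Matrix.det_submatrix_equiv_self]
  have hgoal : (R.submatrix (fun k : {k : Fin d // k ≠ i ∧ k ≠ j} => (k : Fin d))
      (fun k : {k : Fin d // k ≠ i ∧ k ≠ j} => (k : Fin d))) = M.toBlocks₁₁ := by
    ext a b
    rfl
  rw [hgoal, ← hdet, isUnit_iff_ne_zero]
  exact mul_ne_zero (hMdet ▸ (isUnit_iff_ne_zero.mp hR)) hN22
end

section
/- Under the hypotheses of the main theorem (Σ positive definite, R a P-matrix, R⁻¹μ < 0), if the d-dimensional polynomial identity γ(θ) = Σ_{i=1}^d C_i γ_i(θ)(α_i - θ_i) holds for all θ ∈ ℝ^d with C_i > 0 and α > 0, then α_i = θ^{(i,r)}_i for every i. -/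
/-!
Take `θ = Δ_i B^{(i)}`, where `B^{(i)}` is the `i`-th row of `R⁻¹`. The choice of `Δ_i` makes the
quadratic side `γ(θ)` vanish, and `R⁻¹ R = 1` makes `γ_k(θ) = Δ_i δ_{ik}`, so the identity collapses
to `0 = C_i Δ_i (α_i - θ_i)` with `C_i Δ_i ≠ 0`.
-/

open Matrix

theorem neg_half_dotProduct_mulVec_sub_dotProduct_smul_eq_zero {n : Type*} [Fintype n]
    (S : Matrix n n ℝ) (μ v : n → ℝ) (hv : v ⬝ᵥ S *ᵥ v ≠ 0) {c : ℝ}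
    (hc : c = -2 * (μ ⬝ᵥ v) / (v ⬝ᵥ S *ᵥ v)) :
    -(1/2 : ℝ) * ((c • v) ⬝ᵥ S *ᵥ (c • v)) - μ ⬝ᵥ (c • v) = 0 := by
  have hcv : c * (v ⬝ᵥ S *ᵥ v) = -2 * (μ ⬝ᵥ v) := by rw [hc]; field_simp
  simp only [mulVec_smul, dotProduct_smul, smul_dotProduct, smul_eq_mul]
  linear_combination (-(1/2 : ℝ) * c) * hcv

theorem col_dotProduct_smul_row_inv {n : Type*} [Fintype n] [DecidableEq n]
    (R : Matrix n n ℝ) (hR : IsUnit R.det) (c : ℝ) (i k : n) :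
    (fun l => R l k) ⬝ᵥ (c • R⁻¹ i) = c * (1 : Matrix n n ℝ) i k := by
  rw [dotProduct_smul, dotProduct_comm, ← mul_apply', nonsing_inv_mul R hR, smul_eq_mul]

theorem eq_of_weighted_sum_eq_zero_of_single {ι : Type*} [Fintype ι]
    (C g α θ : ι → ℝ) (i : ι) (hg : ∀ k ≠ i, g k = 0) (hCi : C i ≠ 0) (hgi : g i ≠ 0)
    (h : 0 = ∑ k, C k * g k * (α k - θ k)) : α i = θ i := by
  rw [Fintype.sum_eq_single i fun k hk => by rw [hg k hk]; ring] at h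
  have := (mul_eq_zero.mp h.symm).resolve_left (mul_ne_zero hCi hgi)
  linarith

theorem alpha_eq_theta_ray_coordinate_general {d : ℕ}
    (S : Matrix (Fin d) (Fin d) ℝ) (hS : S.PosDef)
    (μ : Fin d → ℝ) (R : Matrix (Fin d) (Fin d) ℝ)
    (hRdet : IsUnit R.det)
    (hμ : ∀ i, (R⁻¹.mulVec μ) i < 0)
    (B : Fin d → Fin d → ℝ) (hB : ∀ i k, B i k = (R⁻¹)ᵀ k i)
    (Δ : Fin d → ℝ) (hΔ : ∀ i, Δ i = -2 * (μ ⬝ᵥ B i) / (B i ⬝ᵥ S.mulVec (B i)))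
    (θr : Fin d → Fin d → ℝ) (hθr : ∀ i, θr i = Δ i • B i)
    (C : Fin d → ℝ) (hC : ∀ i, 0 < C i)
    (α : Fin d → ℝ)
    (hid : ∀ θ : Fin d → ℝ,
      -(1/2 : ℝ) * (θ ⬝ᵥ S.mulVec θ) - μ ⬝ᵥ θ
        = ∑ i : Fin d, C i * ((fun l => R l i) ⬝ᵥ θ) * (α i - θ i)) :
    ∀ i : Fin d, α i = θr i i := by
  intro i
  have hBi : B i = R⁻¹ i := funext (hB i)
  have hμB : μ ⬝ᵥ B i ≠ 0 := by
    rw [hBi, dotProduct_comm]; exact (hμ i).ne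
  have hq : 0 < B i ⬝ᵥ S *ᵥ B i := by
    simpa using hS.dotProduct_mulVec_pos fun h => hμB (by rw [h, dotProduct_zero])
  have hΔi : Δ i ≠ 0 := by
    rw [hΔ i]; exact div_ne_zero (mul_ne_zero (by norm_num) hμB) hq.ne'
  have hidi := hid (θr i)
  rw [hθr i, neg_half_dotProduct_mulVec_sub_dotProduct_smul_eq_zero S μ _ hq.ne' (hΔ i), hBi]
    at hidi
  simp only [col_dotProduct_smul_row_inv R hRdet] at hidi
  refine eq_of_weighted_sum_eq_zero_of_single C (fun k => Δ i * (1 : Matrix _ _ ℝ) i k) α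
    (θr i) i (fun k hk => by simp [one_apply_ne' hk]) (hC i).ne' (by simpa using hΔi) ?_
  rwa [hθr i, hBi]

theorem alpha_eq_theta_ray_coordinate {d : ℕ}
    (S : Matrix (Fin d) (Fin d) ℝ) (hS : S.PosDef)
    (μ : Fin d → ℝ) (R : Matrix (Fin d) (Fin d) ℝ)
    (hP : IsPMatrix R) (hRdet : IsUnit R.det)
    (hμ : ∀ i, (R⁻¹.mulVec μ) i < 0)
    (B : Fin d → Fin d → ℝ) (hB : ∀ i k, B i k = (R⁻¹)ᵀ k i)
    (Δ : Fin d → ℝ) (hΔ : ∀ i, Δ i = -2 * (μ ⬝ᵥ B i) / (B i ⬝ᵥ S.mulVec (B i)))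
    (θr : Fin d → Fin d → ℝ) (hθr : ∀ i, θr i = Δ i • B i)
    (C : Fin d → ℝ) (hC : ∀ i, 0 < C i)
    (α : Fin d → ℝ) (hα : ∀ i, 0 < α i)
    (hid : ∀ θ : Fin d → ℝ,
      -(1/2 : ℝ) * (θ ⬝ᵥ S.mulVec θ) - μ ⬝ᵥ θ
        = ∑ i : Fin d, C i * ((fun l => R l i) ⬝ᵥ θ) * (α i - θ i)) :
    ∀ i : Fin d, α i = θr i i :=
  alpha_eq_theta_ray_coordinate_general S hS μ R hRdet hμ B hB Δ hΔ θr hθr C hC α hid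
end

section
/- Let d = 3, R the lower bidiagonal matrix with R_{ii} = 1, R_{i,i-1} = -1 (the tandem-queue reflection matrix), Σ with Σ_{ii} = c_{i-1} + c_i, Σ_{i,i-1} = Σ_{i-1,i} = -c_{i-1} for positive constants c_0,…,c_3, and μ_i = β_{i-1} - β_i with R⁻¹μ < 0. Define b = -R⁻¹μ and τ_i = 2b_i/(c_0 + c_i). Then θ^{(i,r)}_j = τ_i for j ≤ i and θ^{(i,r)}_j = 0 for j > i, where θ^{(i,r)} = Δ_i B^{(i)} as above. -/
open Matrix

/-! Row `i` of `R⁻¹` is the indicator of `{k ≤ i}`, and `B^{(i)}` is exactly that row. Hence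
`⟨μ, B^{(i)}⟩ = (R⁻¹μ)_i = -b_i` with no computation, while the quadratic form of `Σ` is a weighted
sum of squared increments `c₀x₀² + c₁(x₁-x₀)² + c₂(x₂-x₁)² + c₃x₂²`, which on an indicator of
`{k ≤ i}` leaves only the two boundary terms `c₀ + c_i`. So `Δ_i = τ_i` and `θ^{(i,r)} = τ_i B^{(i)}`. -/

section TandemThree

variable {α : Type*} [CommRing α]

theorem inv_tandemReflection_three :
    (!![1, 0, 0; -1, 1, 0; 0, -1, 1] : Matrix (Fin 3) (Fin 3) α)⁻¹ =
      of fun i k => if k ≤ i then 1 else 0 := by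
  apply inv_eq_right_inv
  ext i j
  fin_cases i <;> fin_cases j <;> simp [mul_apply, Fin.sum_univ_three]

theorem dotProduct_tandemCovariance_mulVec (c0 c1 c2 c3 : α) (x : Fin 3 → α) :
    x ⬝ᵥ (!![c0 + c1, -c1, 0; -c1, c1 + c2, -c2; 0, -c2, c2 + c3] *ᵥ x) =
      c0 * x 0 ^ 2 + c1 * (x 1 - x 0) ^ 2 + c2 * (x 2 - x 1) ^ 2 + c3 * x 2 ^ 2 := by
  simp only [dotProduct, mulVec, Fin.sum_univ_three, of_apply, cons_val', cons_val_zero,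
    cons_val_one, cons_val_two, empty_val', cons_val_fin_one, tail_cons, vecHead]
  ring

theorem dotProduct_tandemCovariance_mulVec_indicator (c0 c1 c2 c3 : α) (i : Fin 3) :
    (fun k => if k ≤ i then 1 else 0) ⬝ᵥ
        (!![c0 + c1, -c1, 0; -c1, c1 + c2, -c2; 0, -c2, c2 + c3] *ᵥ
          fun k => if k ≤ i then 1 else 0) =
      c0 + ![c1, c2, c3] i := by
  rw [dotProduct_tandemCovariance_mulVec]
  fin_cases i <;> simp

end TandemThree

theorem theta_ray_three_station_tandem_general
    (c0 c1 c2 c3 : ℝ)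
    (R : Matrix (Fin 3) (Fin 3) ℝ) (hR : R = !![1, 0, 0; -1, 1, 0; 0, -1, 1])
    (S : Matrix (Fin 3) (Fin 3) ℝ)
    (hS : S = !![c0 + c1, -c1, 0; -c1, c1 + c2, -c2; 0, -c2, c2 + c3])
    (μ : Fin 3 → ℝ)
    (b : Fin 3 → ℝ) (hb : b = -(R⁻¹.mulVec μ))
    (c : Fin 3 → ℝ) (hc : c = ![c1, c2, c3])
    (τ : Fin 3 → ℝ) (hτ : ∀ i, τ i = 2 * b i / (c0 + c i))
    (B : Fin 3 → Fin 3 → ℝ) (hB : ∀ i k, B i k = (R⁻¹)ᵀ k i)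
    (Δ : Fin 3 → ℝ) (hΔ : ∀ i, Δ i = -2 * (μ ⬝ᵥ B i) / (B i ⬝ᵥ S.mulVec (B i)))
    (θr : Fin 3 → Fin 3 → ℝ) (hθr : ∀ i, θr i = Δ i • B i) :
    ∀ i j : Fin 3, (j ≤ i → θr i j = τ i) ∧ (i < j → θr i j = 0) := by
  have hB_row : ∀ i, B i = R⁻¹ i := fun i => funext (hB i)
  have hB_indicator : ∀ i, B i = fun k => if k ≤ i then 1 else 0 := by
    intro i
    rw [hB_row, hR, inv_tandemReflection_three]
    rfl
  have hΔτ : ∀ i, Δ i = τ i := by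
    intro i
    have hμB : μ ⬝ᵥ B i = (R⁻¹ *ᵥ μ) i := by rw [dotProduct_comm, hB_row]; rfl
    rw [hΔ, hτ, hb, hμB, hB_indicator, hS, hc,
      dotProduct_tandemCovariance_mulVec_indicator, Pi.neg_apply, neg_mul_comm]
  intro i j
  simp only [hθr, hB_indicator, hΔτ, Pi.smul_apply, smul_eq_mul, mul_ite, mul_one, mul_zero]
  exact ⟨fun hji => if_pos hji, fun hij => if_neg (not_le.2 hij)⟩

theorem theta_ray_three_station_tandem
    (c0 c1 c2 c3 β0 β1 β2 β3 : ℝ)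
    (hc0 : 0 < c0) (hc1 : 0 < c1) (hc2 : 0 < c2) (hc3 : 0 < c3)
    (R : Matrix (Fin 3) (Fin 3) ℝ) (hR : R = !![1, 0, 0; -1, 1, 0; 0, -1, 1])
    (S : Matrix (Fin 3) (Fin 3) ℝ)
    (hS : S = !![c0 + c1, -c1, 0; -c1, c1 + c2, -c2; 0, -c2, c2 + c3])
    (μ : Fin 3 → ℝ) (hμ : μ = ![β0 - β1, β1 - β2, β2 - β3])
    (hstab : ∀ i, (R⁻¹.mulVec μ) i < 0)
    (b : Fin 3 → ℝ) (hb : b = -(R⁻¹.mulVec μ))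
    (c : Fin 3 → ℝ) (hc : c = ![c1, c2, c3])
    (τ : Fin 3 → ℝ) (hτ : ∀ i, τ i = 2 * b i / (c0 + c i))
    (B : Fin 3 → Fin 3 → ℝ) (hB : ∀ i k, B i k = (R⁻¹)ᵀ k i)
    (Δ : Fin 3 → ℝ) (hΔ : ∀ i, Δ i = -2 * (μ ⬝ᵥ B i) / (B i ⬝ᵥ S.mulVec (B i)))
    (θr : Fin 3 → Fin 3 → ℝ) (hθr : ∀ i, θr i = Δ i • B i) :
    ∀ i j : Fin 3, (j ≤ i → θr i j = τ i) ∧ (i < j → θr i j = 0) :=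
  theta_ray_three_station_tandem_general c0 c1 c2 c3 R hR S hS μ b hb c hc τ hτ B hB Δ hΔ θr hθr
end

section
/- In the 3-dimensional tandem example with R = [[1,0,0],[-1,1,0],[0,-1,1]], Σ = [[1,-1,0],[-1,3,-2],[0,-2,3]], μ = (-1/2, -3/2, 3/2)ᵀ: R⁻¹μ = (-1/2, -2, -1/2)ᵀ < 0, θ^{(1,r)} = (1,0,0)ᵀ, θ^{(2,r)} = (2,2,0)ᵀ, θ^{(3,r)} = (1,1,1)ᵀ, γ(τ) = 0 for τ = (1,2,1)ᵀ, yet γ(θ^{(12)}) = -1 ≠ 0 where θ^{(12)} = f^{12}(1,2) = (1,2,0)ᵀ. -/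
open Matrix

theorem three_dim_tandem_example
    (R : Matrix (Fin 3) (Fin 3) ℝ) (hR : R = !![1, 0, 0; -1, 1, 0; 0, -1, 1])
    (S : Matrix (Fin 3) (Fin 3) ℝ) (hS : S = !![1, -1, 0; -1, 3, -2; 0, -2, 3])
    (μ : Fin 3 → ℝ) (hμ : μ = ![-(1/2 : ℝ), -(3/2), 3/2])
    (γ : (Fin 3 → ℝ) → ℝ)
    (hγ : ∀ θ, γ θ = -(1/2 : ℝ) * (θ ⬝ᵥ S.mulVec θ) - μ ⬝ᵥ θ)
    (B : Fin 3 → Fin 3 → ℝ) (hB : ∀ i k, B i k = (R⁻¹)ᵀ k i)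
    (Δ : Fin 3 → ℝ) (hΔ : ∀ i, Δ i = -2 * (μ ⬝ᵥ B i) / (B i ⬝ᵥ S.mulVec (B i)))
    (θr : Fin 3 → Fin 3 → ℝ) (hθr : ∀ i, θr i = Δ i • B i) :
    R⁻¹.mulVec μ = ![-(1/2 : ℝ), -2, -(1/2)] ∧
    (∀ i, (R⁻¹.mulVec μ) i < 0) ∧
    θr 0 = ![1, 0, 0] ∧ θr 1 = ![2, 2, 0] ∧ θr 2 = ![1, 1, 1] ∧
    γ ![1, 2, 1] = 0 ∧
    γ ![1, 2, 0] = -1 ∧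
    (![1, 2, 0] : Fin 3 → ℝ) ∈
      Submodule.span ℝ ({![1, 0, 0], ![2, 2, 0]} : Set (Fin 3 → ℝ)) := by
  have hRinv : R⁻¹ = !![1, 0, 0; 1, 1, 0; 1, 1, 1] := by
    apply inv_eq_right_inv
    subst hR
    ext i j
    fin_cases i <;> fin_cases j <;>
      simp [Matrix.mul_apply, Fin.sum_univ_succ]
  have hB0 : B 0 = ![1, 0, 0] := by
    funext k; rw [hB, hRinv]; fin_cases k <;> simp [Matrix.transpose_apply, Matrix.vecHead, Matrix.vecTail]
  have hB1 : B 1 = ![1, 1, 0] := by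
    funext k; rw [hB, hRinv]; fin_cases k <;> simp [Matrix.transpose_apply, Matrix.vecHead, Matrix.vecTail]
  have hB2 : B 2 = ![1, 1, 1] := by
    funext k; rw [hB, hRinv]; fin_cases k <;> simp [Matrix.transpose_apply, Matrix.vecHead, Matrix.vecTail]
  refine ⟨?_, ?_, ?_, ?_, ?_, ?_, ?_, ?_⟩
  · rw [hRinv, hμ]
    funext i
    fin_cases i <;>
      norm_num [Matrix.mulVec, dotProduct, Fin.sum_univ_succ]
  · intro i
    rw [hRinv, hμ]
    fin_cases i <;>
      norm_num [Matrix.mulVec, dotProduct, Fin.sum_univ_succ]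
  · rw [hθr, hΔ, hB0, hμ, hS]
    funext k
    fin_cases k <;>
      norm_num [Matrix.mulVec, dotProduct, Fin.sum_univ_succ]
  · rw [hθr, hΔ, hB1, hμ, hS]
    funext k
    fin_cases k <;>
      norm_num [Matrix.mulVec, dotProduct, Fin.sum_univ_succ]
  · rw [hθr, hΔ, hB2, hμ, hS]
    funext k
    fin_cases k <;>
      norm_num [Matrix.mulVec, dotProduct, Fin.sum_univ_succ]
  · rw [hγ, hμ, hS]
    norm_num [Matrix.mulVec, dotProduct, Fin.sum_univ_succ]
  · rw [hγ, hμ, hS]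
    norm_num [Matrix.mulVec, dotProduct, Fin.sum_univ_succ]
  · have h : (![1, 2, 0] : Fin 3 → ℝ) = (1 : ℝ) • ![2, 2, 0] + (-1 : ℝ) • ![1, 0, 0] := by
      funext k; fin_cases k <;> norm_num
    rw [h]
    exact Submodule.add_mem _
      (Submodule.smul_mem _ _ (Submodule.subset_span (by simp)))
      (Submodule.smul_mem _ _ (Submodule.subset_span (by simp)))
end

section
/- The 4×4 nonnegative matrix R = [[1,1/2,1,0],[2,1,0,1],[1,0,1,0],[0,1,0,1]] is a completely-S matrix, is invertible with R⁻¹ = [[0,1/2,0,-1/2],[2,0,-2,0],[0,-1/2,1,1/2],[-2,0,2,1]], and the 2×2 principal submatrix of R⁻¹ with rows and columns {3,4} has determinant det((R⁻¹)^{34}) = 1·1 - (1/2)(2) = 0, so c_{34} = 0 even though R⁻¹μ < 0 for μ = -(1.1,1.1,1,1)ᵀ. -/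
open Matrix

/-- A real square matrix is an S-matrix if `A w > 0` for some `w ≥ 0`. -/
def IsSMatrix {n : Type*} [Fintype n] (A : Matrix n n ℝ) : Prop :=
  ∃ w : n → ℝ, (∀ i, 0 ≤ w i) ∧ ∀ i, 0 < A.mulVec w i

/-- A real square matrix is completely-S if every (nonempty) principal submatrix
is an S-matrix. -/
def IsCompletelyS {d : ℕ} (A : Matrix (Fin d) (Fin d) ℝ) : Prop :=
  ∀ s : Finset (Fin d), s.Nonempty →
    IsSMatrix (A.submatrix (fun i : s => (i : Fin d)) (fun j : s => (j : Fin d)))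

lemma nonneg_posdiag_completelyS {d : ℕ} (A : Matrix (Fin d) (Fin d) ℝ)
    (h0 : ∀ i j, 0 ≤ A i j) (hd : ∀ i, 0 < A i i) : IsCompletelyS A := by
  intro s _
  refine ⟨fun _ => 1, fun _ => zero_le_one, fun i => ?_⟩
  simp only [Matrix.mulVec, dotProduct, Matrix.submatrix_apply, mul_one]
  exact Finset.sum_pos' (fun j _ => h0 _ _) ⟨i, Finset.mem_univ i, hd _⟩

theorem completely_S_example
    (R : Matrix (Fin 4) (Fin 4) ℝ)
    (hR : R = !![1, 1/2, 1, 0; 2, 1, 0, 1; 1, 0, 1, 0; 0, 1, 0, 1])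
    (μ : Fin 4 → ℝ) (hμ : μ = ![-(11/10 : ℝ), -(11/10), -1, -1]) :
    IsCompletelyS R ∧ IsUnit R.det ∧
    R⁻¹ = !![0, 1/2, 0, -(1/2); 2, 0, -2, 0; 0, -(1/2), 1, 1/2; -2, 0, 2, 1] ∧
    (!![R⁻¹ 2 2, R⁻¹ 2 3; R⁻¹ 3 2, R⁻¹ 3 3] : Matrix (Fin 2) (Fin 2) ℝ).det = 0 ∧
    (∀ i, (R⁻¹.mulVec μ) i < 0) := by
  have hmul : R * !![0, 1/2, 0, -(1/2); 2, 0, -2, 0; 0, -(1/2), 1, 1/2; -2, 0, 2, 1] = 1 := by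
    subst hR
    ext i j
    fin_cases i <;> fin_cases j <;>
      simp [Matrix.mul_apply, Fin.sum_univ_succ] <;> norm_num
  have hinv : R⁻¹ = !![0, 1/2, 0, -(1/2); 2, 0, -2, 0; 0, -(1/2), 1, 1/2; -2, 0, 2, 1] :=
    Matrix.inv_eq_right_inv hmul
  refine ⟨?_, Matrix.isUnit_det_of_right_inverse hmul, hinv, ?_, ?_⟩
  · apply nonneg_posdiag_completelyS
    · intro i j; fin_cases i <;> fin_cases j <;> simp [hR] <;> norm_num
    · intro i; fin_cases i <;> simp [hR] <;> norm_num
  · rw [hinv]; simp [Matrix.det_fin_two]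
  · intro i
    rw [hinv, hμ]
    fin_cases i <;>
      simp [Matrix.mulVec, dotProduct, Fin.sum_univ_succ] <;> norm_num
end

section
/- In the d-station tandem setting with τ_i = 2b_i/(c_0+c_i) where b = -R⁻¹μ, b_i = β_i - β_0: the two symmetry conditions τ_i = (2b_i + c_iτ_j - c_0τ_j)/(c_0 + c_i) and τ_j = (2c_iτ_i + 2b_j - 2b_i)/(c_i + c_j) hold simultaneously for all 1 ≤ i < j ≤ d if and only if c_0 = c_i for all i = 1, …, d-1. -/
/-!
Since `τᵢ (c₀ + cᵢ) = 2 bᵢ`, the first symmetry condition for a pair `i < j` reduces to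
`(cᵢ - c₀) τⱼ = 0`, and `τⱼ > 0`; so it holds exactly when `c₀ = cᵢ`. Once `c₀ = cᵢ`, we get
`2 cᵢ τᵢ = 2 bᵢ`, and the second condition collapses to the definition of `τⱼ`. An index `i` is
the smaller member of some pair precisely when `i < d - 1`.
-/

open Matrix

namespace TandemSRBM

theorem first_symmetry_iff {x y b t : ℝ} (hxy : x + y ≠ 0) (ht : t ≠ 0) :
    2 * b / (x + y) = (2 * b + y * t - x * t) / (x + y) ↔ x = y := by
  rw [div_left_inj' hxy]
  constructor
  · intro h
    have hprod : (y - x) * t = 0 := by linarith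
    linarith [(mul_eq_zero.mp hprod).resolve_right ht]
  · rintro rfl
    ring

theorem second_symmetry_of_eq {x z bi bj : ℝ} (hx : x ≠ 0) :
    2 * bj / (x + z) = (2 * x * (2 * bi / (x + x)) + 2 * bj - 2 * bi) / (x + z) := by
  have hcancel : 2 * x * (2 * bi / (x + x)) = 2 * bi := by
    field_simp
    ring
  rw [hcancel]
  ring_nf

end TandemSRBM

theorem Fin.exists_gt_iff_lt_sub_one {d : ℕ} (i : Fin d) : (∃ j : Fin d, i < j) ↔ (i : ℕ) < d - 1 := by
  constructor
  · rintro ⟨j, hij⟩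
    have := j.isLt
    rw [Fin.lt_def] at hij
    omega
  · intro hi
    exact ⟨⟨i + 1, by omega⟩, by simp [Fin.lt_def]⟩

theorem tandem_product_form_iff_equal_variability {d : ℕ}
    (c β : Fin (d + 1) → ℝ)
    (hc : ∀ k, 0 < c k) (hβ : ∀ i : Fin d, β 0 < β i.succ)
    (b : Fin d → ℝ) (hb : ∀ i, b i = β i.succ - β 0)
    (τ : Fin d → ℝ) (hτ : ∀ i, τ i = 2 * b i / (c 0 + c i.succ)) :
    (∀ i j : Fin d, i < j →
        τ i = (2 * b i + c i.succ * τ j - c 0 * τ j) / (c 0 + c i.succ) ∧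
        τ j = (2 * c i.succ * τ i + 2 * b j - 2 * b i) / (c i.succ + c j.succ))
    ↔ (∀ i : Fin d, (i : ℕ) < d - 1 → c 0 = c i.succ) := by
  have hsum_pos (i : Fin d) : 0 < c 0 + c i.succ := add_pos (hc 0) (hc i.succ)
  have hτ_ne (i : Fin d) : τ i ≠ 0 := by
    rw [hτ, hb]
    exact (div_pos (by linarith [hβ i]) (hsum_pos i)).ne'
  constructor
  · intro h i hi
    obtain ⟨j, hij⟩ := (Fin.exists_gt_iff_lt_sub_one i).mpr hi
    have hfirst := (h i j hij).1
    rwa [hτ i, TandemSRBM.first_symmetry_iff (hsum_pos i).ne' (hτ_ne j)] at hfirst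
  · intro h i j hij
    have hci : c 0 = c i.succ := h i ((Fin.exists_gt_iff_lt_sub_one i).mp ⟨j, hij⟩)
    refine ⟨by rwa [hτ i, TandemSRBM.first_symmetry_iff (hsum_pos i).ne' (hτ_ne j)], ?_⟩
    rw [hτ i, hτ j, ← hci]
    exact TandemSRBM.second_symmetry_of_eq (hc 0).ne'
end
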